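/- For every λ > 0, α > 0 with λα < 1, and every integer m ≥ 0, one has Σ_{i=0}^∞ (1)_{i+m,λ} α^i / i! = (1)_{m,λ} (1+λα)^{(1−λm)/λ}, the series on the left being absolutely convergent. -/

import Mathlib

open Finset Filter Set Topology

/-- The lambda-falling factorial `(x)_{n,lam}`. -/
noncomputable def dffac (lam x : ℝ) (n : ℕ) : ℝ := ∏ i ∈ Finset.range n, (x - i * lam)

/-- The ordinary falling factorial `(x)_n`. -/
noncomputable def ffac (x : ℝ) (n : ℕ) : ℝ := ∏ i ∈ Finset.range n, (x - i)

/-- The rising factorial. -/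
noncomputable def rfac (x : ℝ) (n : ℕ) : ℝ := ∏ i ∈ Finset.range n, (x + i)

lemma ffac_succ (x : ℝ) (n : ℕ) : ffac x (n + 1) = ffac x n * (x - n) :=
  Finset.prod_range_succ _ _

lemma rfac_succ (x : ℝ) (n : ℕ) : rfac x (n + 1) = rfac x n * (x + n) :=
  Finset.prod_range_succ _ _

lemma rfac_pos {x : ℝ} (hx : 0 < x) (n : ℕ) : 0 < rfac x n :=
  Finset.prod_pos fun i _ => by positivity

lemma abs_ffac_le (s : ℝ) (n : ℕ) : |ffac s n| ≤ rfac (|s| + 1) n := by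
  rw [ffac, Finset.abs_prod]
  refine Finset.prod_le_prod (fun i _ => abs_nonneg _) (fun i _ => ?_)
  have h1 : |s - (i : ℝ)| ≤ |s| + |(i : ℝ)| := abs_sub _ _
  have h2 : |(i : ℝ)| = (i : ℝ) := abs_of_nonneg (Nat.cast_nonneg i)
  linarith

set_option maxHeartbeats 1000000 in
/-- The generalized binomial series. -/
lemma binomial_series (s x : ℝ) (hx0 : 0 ≤ x) (hx1 : x < 1) :
    Summable (fun n : ℕ => ffac s n * x ^ n / (n.factorial : ℝ)) ∧
      ∑' n : ℕ, ffac s n * x ^ n / (n.factorial : ℝ) = (1 + x) ^ s := by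
  set c : ℕ → ℝ := fun n => ffac s n / (n.factorial : ℝ) with hc
  set r : ℝ := (1 + x) / 2 with hr
  have hxr : x < r := by rw [hr]; linarith
  have hr0 : 0 < r := by rw [hr]; linarith
  have hr1 : r < 1 := by rw [hr]; linarith
  set u : ℕ → ℝ := fun n => rfac (|s| + 1) n / (n.factorial : ℝ) * (n * r ^ (n - 1)) with hu
  have hupos : ∀ n : ℕ, 1 ≤ n → 0 < u n := by
    intro n hn
    have h1 : 0 < rfac (|s| + 1) n := rfac_pos (by positivity) n
    have h2 : (0 : ℝ) < n := by exact_mod_cast hn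
    have h3 : (0 : ℝ) < (n.factorial : ℝ) := by exact_mod_cast n.factorial_pos
    have h4 : 0 < r ^ (n - 1) := pow_pos hr0 _
    rw [hu]; positivity
  -- summability of the bound series by the ratio test
  have hratio : ∀ n : ℕ, 1 ≤ n → u (n + 1) / u n = r * ((|s| + 1) / n + 1) := by
    intro n hn
    obtain ⟨k, rfl⟩ : ∃ k, n = k + 1 := ⟨n - 1, by omega⟩
    have hfac : (0 : ℝ) < ((k + 1).factorial : ℝ) := by exact_mod_cast (k + 1).factorial_pos
    have hrf : 0 < rfac (|s| + 1) (k + 1) := rfac_pos (by positivity) _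
    have hrp : 0 < r ^ k := pow_pos hr0 _
    have hfacne : ((k + 1).factorial : ℝ) ≠ 0 := hfac.ne'
    have hrfne : rfac (|s| + 1) (k + 1) ≠ 0 := hrf.ne'
    have hrpne : r ^ k ≠ 0 := hrp.ne'
    have hk1 : ((k : ℝ) + 1) ≠ 0 := by positivity
    rw [hu]
    simp only [Nat.add_sub_cancel]
    rw [rfac_succ, Nat.factorial_succ (k + 1)]
    push_cast
    field_simp
    ring
  have hU : Summable u := by
    apply summable_of_ratio_test_tendsto_lt_one hr1
    · filter_upwards [eventually_ge_atTop 1] with n hn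
      exact (hupos n hn).ne'
    · have hlim : Tendsto (fun n : ℕ => r * ((|s| + 1) / n + 1)) atTop (𝓝 (r * (0 + 1))) :=
        (((tendsto_const_div_atTop_nhds_zero_nat (|s| + 1)).add_const 1).const_mul r)
      rw [show r * (0 + 1) = r by ring] at hlim
      apply hlim.congr'
      filter_upwards [eventually_ge_atTop 1] with n hn
      rw [Real.norm_eq_abs, Real.norm_eq_abs, abs_of_pos (hupos _ (by omega)),
        abs_of_pos (hupos n hn), hratio n hn]
  -- the setting for term-by-term differentiation
  set t : Set ℝ := Ioo (-r) r with ht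
  have htop : IsOpen t := isOpen_Ioo
  have htc : IsPreconnected t := isPreconnected_Ioo
  have hderiv_pt : ∀ (n : ℕ) (y : ℝ),
      HasDerivAt (fun z => c n * z ^ n) (c n * ((n : ℝ) * y ^ (n - 1))) y :=
    fun n y => (hasDerivAt_pow n y).const_mul (c n)
  have hbound : ∀ (n : ℕ) (y : ℝ), y ∈ t → ‖c n * ((n : ℝ) * y ^ (n - 1))‖ ≤ u n := by
    intro n y hy
    have hyr : |y| ≤ r := by
      rw [abs_le]; exact ⟨hy.1.le, hy.2.le⟩
    have hcn : |c n| ≤ rfac (|s| + 1) n / (n.factorial : ℝ) := by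
      rw [hc]
      simp only [abs_div, Nat.abs_cast]
      gcongr
      · exact abs_ffac_le s n
    have hrfn : (0 : ℝ) ≤ rfac (|s| + 1) n / (n.factorial : ℝ) := by
      have := rfac_pos (show (0:ℝ) < |s| + 1 by positivity) n
      positivity
    have hpy : |y| ^ (n - 1) ≤ r ^ (n - 1) := pow_le_pow_left₀ (abs_nonneg y) hyr _
    rw [Real.norm_eq_abs, abs_mul, abs_mul, abs_pow, Nat.abs_cast, hu]
    exact mul_le_mul hcn
      (mul_le_mul le_rfl hpy (by positivity) (Nat.cast_nonneg n)) (by positivity) hrfn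
  have h0mem : (0 : ℝ) ∈ t := ⟨by linarith, hr0⟩
  have hxmem : x ∈ t := ⟨by linarith, hxr⟩
  have hg0 : Summable fun n : ℕ => c n * (0 : ℝ) ^ n := by
    apply summable_of_ne_finset_zero (s := {0})
    intro n hn
    simp only [Finset.mem_singleton] at hn
    simp [zero_pow hn]
  have hsum : ∀ y ∈ t, Summable fun n : ℕ => c n * y ^ n := fun y hy =>
    summable_of_summable_hasDerivAt_of_isPreconnected hU htop htc
      (fun n z hz => hderiv_pt n z) hbound h0mem hg0 hy
  set g : ℝ → ℝ := fun y => ∑' n : ℕ, c n * y ^ n with hg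
  set D : ℝ → ℝ := fun y => ∑' n : ℕ, c n * ((n : ℝ) * y ^ (n - 1)) with hD
  have hgderiv : ∀ y ∈ t, HasDerivAt g (D y) y := fun y hy =>
    hasDerivAt_tsum_of_isPreconnected hU htop htc
      (fun n z hz => hderiv_pt n z) hbound h0mem hg0 hy
  -- recurrence for the coefficients
  have hrec : ∀ n : ℕ, c (n + 1) * ((n : ℝ) + 1) = (s - n) * c n := by
    intro n
    have hfac : ((n.factorial : ℝ)) ≠ 0 := by exact_mod_cast n.factorial_pos.ne'
    rw [hc]
    simp only
    rw [ffac_succ, Nat.factorial_succ]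
    push_cast
    field_simp
  -- the differential equation
  have key : ∀ y ∈ t, (1 + y) * D y = s * g y := by
    intro y hy
    have hDsum : Summable fun n : ℕ => c n * ((n : ℝ) * y ^ (n - 1)) :=
      Summable.of_norm_bounded hU (fun n => hbound n y hy)
    have hgsum : Summable fun n : ℕ => c n * y ^ n := hsum y hy
    have hfun : (fun n : ℕ => c n * ((n : ℝ) * y ^ n)) =
        fun n : ℕ => y * (c n * ((n : ℝ) * y ^ (n - 1))) := by
      funext n
      cases n with
      | zero => simp
      | succ k => simp only [Nat.add_sub_cancel]; rw [pow_succ]; ring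
    have hnsum : Summable fun n : ℕ => c n * ((n : ℝ) * y ^ n) := by
      rw [hfun]; exact hDsum.mul_left y
    have hshiftsum : Summable fun n : ℕ => c (n + 1) * (((n : ℝ) + 1) * y ^ n) := by
      have := (summable_nat_add_iff 1).mpr hDsum
      apply this.congr
      intro n
      simp only [Nat.add_sub_cancel]
      push_cast
      ring
    have hshift : D y = ∑' n : ℕ, c (n + 1) * (((n : ℝ) + 1) * y ^ n) := by
      rw [hD]
      simp only
      rw [hDsum.tsum_eq_zero_add]
      simp only [Nat.cast_zero, zero_mul, mul_zero, zero_add, Nat.add_sub_cancel]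
      push_cast
      rfl
    have hyD : y * D y = ∑' n : ℕ, c n * ((n : ℝ) * y ^ n) := by
      rw [hD]
      simp only
      rw [← tsum_mul_left, hfun]
    calc (1 + y) * D y = D y + y * D y := by ring
      _ = ∑' n : ℕ, (c (n + 1) * (((n : ℝ) + 1) * y ^ n) + c n * ((n : ℝ) * y ^ n)) := by
          rw [hyD, hshift, ← Summable.tsum_add hshiftsum hnsum]
      _ = ∑' n : ℕ, s * (c n * y ^ n) := by
          apply tsum_congr
          intro n
          linear_combination y ^ n * hrec n
      _ = s * g y := by rw [tsum_mul_left]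
  -- the auxiliary function g y * (1+y)^(-s) has zero derivative on t
  set h : ℝ → ℝ := fun y => g y * (1 + y) ^ (-s) with hh
  have hhd : ∀ y ∈ t, HasDerivAt h 0 y := by
    intro y hy
    obtain ⟨hy1, hy2⟩ := hy
    have hy' : y ∈ t := ⟨hy1, hy2⟩
    have h1y : 0 < 1 + y := by linarith
    have hpow := HasDerivAt.rpow_const (p := -s) ((hasDerivAt_id y).const_add 1) (Or.inl h1y.ne')
    simp only [id_eq] at hpow
    have htot := (hgderiv y hy').mul hpow
    have he : (1 + y) ^ (-s) = (1 + y) ^ (-s - 1) * (1 + y) := by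
      have h2 := Real.rpow_add h1y (-s - 1) 1
      rw [Real.rpow_one] at h2
      rw [show -s - 1 + 1 = -s by ring] at h2
      exact h2
    have hk := key y hy' 
    convert htot using 1
    · rfl
    · rfl
    · rfl
    rw [he]
    linear_combination (-(1 + y) ^ (-s - 1)) * hk
  -- h is constant on [0, x]
  have hsub : Icc (0 : ℝ) x ⊆ t := by
    intro y hy
    obtain ⟨h1, h2⟩ := hy
    exact ⟨by linarith, by linarith⟩
  have hcst : h x = h 0 := by
    have := constant_of_has_deriv_right_zero (f := h) (a := 0) (b := x)
      (fun y hy => ((hhd y (hsub hy)).continuousAt).continuousWithinAt)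
      (fun y hy => ((hhd y (hsub (Ico_subset_Icc_self hy))).hasDerivWithinAt))
    exact this x (right_mem_Icc.mpr hx0)
  have hg0val : g 0 = 1 := by
    rw [hg]
    simp only
    rw [tsum_eq_single 0 (fun n hn => by simp [zero_pow hn])]
    simp [hc, ffac]
  have hh0 : h 0 = 1 := by
    rw [hh]; simp only
    rw [hg0val, add_zero, Real.one_rpow, one_mul]
  have hgx : g x = (1 + x) ^ s := by
    have h1x : (0 : ℝ) < 1 + x := by linarith
    have hne : (1 + x) ^ s ≠ 0 := (Real.rpow_pos_of_pos h1x s).ne'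
    have : g x * (1 + x) ^ (-s) = 1 := by
      have h2 := hcst.trans hh0
      simpa [hh] using h2
    rw [Real.rpow_neg h1x.le] at this
    exact (mul_inv_eq_one₀ hne).mp this
  have hfeq : (fun n : ℕ => ffac s n * x ^ n / (n.factorial : ℝ)) = fun n : ℕ => c n * x ^ n := by
    funext n; rw [hc]; ring
  constructor
  · rw [hfeq]; exact hsum x hxmem
  · rw [hfeq]; exact hgx

theorem stmt_15 (lam a : ℝ) (hlam : 0 < lam) (ha : 0 < a) (hla : lam * a < 1) (m : ℕ) :
    Summable (fun i : ℕ => dffac lam 1 (i + m) * a ^ i / (i.factorial : ℝ)) ∧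
      ∑' i : ℕ, dffac lam 1 (i + m) * a ^ i / (i.factorial : ℝ) =
        dffac lam 1 m * (1 + lam * a) ^ ((1 - lam * m) / lam) := by
  set s : ℝ := (1 - lam * m) / lam with hs
  have hls : lam * s = 1 - lam * m := by
    rw [hs]; field_simp
  obtain ⟨hsum, htsum⟩ := binomial_series s (lam * a) (by positivity) hla
  have hterm : ∀ i : ℕ, dffac lam 1 (i + m) * a ^ i / (i.factorial : ℝ) =
      dffac lam 1 m * (ffac s i * (lam * a) ^ i / (i.factorial : ℝ)) := by
    intro i
    have hsplit : dffac lam 1 (i + m) = dffac lam 1 m * ∏ j ∈ Finset.range i, (1 - ((m + j : ℕ) : ℝ) * lam) := by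
      rw [dffac, dffac, add_comm i m, Finset.prod_range_add]
    have hfac : ∀ j : ℕ, (1 : ℝ) - ((m + j : ℕ) : ℝ) * lam = lam * (s - j) := by
      intro j
      push_cast
      linear_combination -hls
    have : ∏ j ∈ Finset.range i, (1 - ((m + j : ℕ) : ℝ) * lam) = lam ^ i * ffac s i :=
      calc ∏ j ∈ Finset.range i, (1 - ((m + j : ℕ) : ℝ) * lam)
          = ∏ j ∈ Finset.range i, (lam * (s - j)) := Finset.prod_congr rfl fun j _ => hfac j
        _ = lam ^ i * ffac s i := by
            rw [Finset.prod_mul_distrib, Finset.prod_const, Finset.card_range, ffac]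
    rw [hsplit, this, mul_pow]
    ring
  constructor
  · exact (hsum.mul_left (dffac lam 1 m)).congr fun i => (hterm i).symm
  · calc ∑' i : ℕ, dffac lam 1 (i + m) * a ^ i / (i.factorial : ℝ)
        = ∑' i : ℕ, dffac lam 1 m * (ffac s i * (lam * a) ^ i / (i.factorial : ℝ)) :=
          tsum_congr hterm
      _ = dffac lam 1 m * (1 + lam * a) ^ s := by rw [tsum_mul_left, htsum]
      _ = dffac lam 1 m * (1 + lam * a) ^ ((1 - lam * m) / lam) := by rw [hs]
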